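/- arXiv:2403.12598 — 3 statements merged into one kernel-verified Lean document; each statement's English description precedes it below -/
import Mathlib

section
/- Let W be a row-stochastic n×n matrix, μ an arbitrary probability vector on {1,...,n}, W_μ = diag(μ)W, and for x ∈ {0,1}ⁿ define p⁺_μ(x) = r·x·W_μ·(1−x)ᵀ/(1+(r−1)xμᵀ) and p⁻_μ(x) = (1−x)·W_μ·xᵀ/(1+(r−1)xμᵀ). Suppose W is irreducible (strongly connected) with all n ≥ 2. Then the ratio p⁻_μ(x)/p⁺_μ(x) is constant over all non-absorbing configurations x (equal to 1/r) if and only if μW = μ, i.e. μ is the stationary distribution of W. -/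
lemma cut_lemma (n : ℕ) (W : Matrix (Fin n) (Fin n) ℝ) (P : Fin n → Prop) [DecidablePred P]
    (h : ∀ i j, P i → ¬ P j → W i j = 0) :
    ∀ (k : ℕ) (i j : Fin n), P i → ¬ P j → (W ^ k) i j = 0 := by
  intro k
  induction k with
  | zero =>
    intro i j hi hj
    rw [pow_zero, Matrix.one_apply_ne]
    rintro rfl; exact hj hi
  | succ k ih =>
    intro i j hi hj
    rw [pow_succ, Matrix.mul_apply]
    apply Finset.sum_eq_zero
    intro l _
    by_cases hl : P l
    · rw [h l j hl hj, mul_zero]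
    · rw [ih i l hi hl, zero_mul]

-- positivity of stationary distribution
lemma stat_pos (n : ℕ) (W : Matrix (Fin n) (Fin n) ℝ) (hnn : ∀ i j, 0 ≤ W i j)
    (hirr : ∀ i j : Fin n, ∃ k : ℕ, (W ^ k) i j ≠ 0)
    (μ : Fin n → ℝ) (hμnn : ∀ i, 0 ≤ μ i) (hμsum : ∑ i, μ i = 1)
    (stat : ∀ j, ∑ i, μ i * W i j = μ j) : ∀ i, 0 < μ i := by
  intro i
  rcases lt_or_eq_of_le (hμnn i) with h | h
  · exact h
  exfalso
  -- edge from {μ ≠ 0} to {μ = 0} is zero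
  have hcut : ∀ a b : Fin n, μ a ≠ 0 → ¬ (μ b ≠ 0) → W a b = 0 := by
    intro a b ha hb
    push_neg at hb
    have h0 : ∑ k, μ k * W k b = 0 := by rw [stat b, hb]
    have := (Finset.sum_eq_zero_iff_of_nonneg (fun k _ => mul_nonneg (hμnn k) (hnn k b))).mp h0
      a (Finset.mem_univ a)
    rcases mul_eq_zero.mp this with h' | h'
    · exact absurd h' ha
    · exact h'
  have hex : ∃ a, μ a ≠ 0 := by
    by_contra hc
    push_neg at hc
    simp [hc] at hμsum
  obtain ⟨a, ha⟩ := hex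
  obtain ⟨k, hk⟩ := hirr a i
  exact hk (cut_lemma n W (fun c => μ c ≠ 0) hcut k a i ha (by simp [← h]))

/-- Let `W` be row-stochastic and irreducible (strongly connected), `n ≥ 2`,
`μ` a probability vector, `W_μ = diag(μ)W`, and for a configuration `x ∈ {0,1}ⁿ` define
`p⁺_μ(x) = r·x·W_μ·(1−x)ᵀ/(1+(r−1)xμᵀ)` and `p⁻_μ(x) = (1−x)·W_μ·xᵀ/(1+(r−1)xμᵀ)`.
Then `p⁻_μ(x)/p⁺_μ(x) = 1/r` for every non-absorbing configuration `x` if and only if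
`μW = μ`, i.e. `μ` is the stationary distribution of `W`. -/
theorem ratio_constant_iff_stationary (n : ℕ) (hn : 2 ≤ n)
    (W : Matrix (Fin n) (Fin n) ℝ) (hnn : ∀ i j, 0 ≤ W i j) (hrow : ∀ i, ∑ j, W i j = 1)
    (hirr : ∀ i j : Fin n, ∃ k : ℕ, (W ^ k) i j ≠ 0)
    (μ : Fin n → ℝ) (hμnn : ∀ i, 0 ≤ μ i) (hμsum : ∑ i, μ i = 1)
    (r : ℝ) (hr : 0 < r) :
    (∀ x : Fin n → ℝ, (∀ i, x i = 0 ∨ x i = 1) →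
        x ≠ (fun _ => 0) → x ≠ (fun _ => 1) →
        ((∑ i, ∑ j, (1 - x i) * (μ i * W i j) * x j) / (1 + (r - 1) * ∑ i, x i * μ i))
          / (r * (∑ i, ∑ j, x i * (μ i * W i j) * (1 - x j)) / (1 + (r - 1) * ∑ i, x i * μ i))
          = 1 / r)
      ↔ (∀ j, ∑ i, μ i * W i j = μ j) := by
  -- denominator positivity for any 0/1 vector
  have hdpos : ∀ x : Fin n → ℝ, (∀ i, x i = 0 ∨ x i = 1) →
      0 < 1 + (r - 1) * ∑ i, x i * μ i := by
    intro x hx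
    set s := ∑ i, x i * μ i with hs
    have hs0 : 0 ≤ s := Finset.sum_nonneg fun i _ => by
      rcases hx i with h | h <;> simp [h, hμnn i]
    have hs1 : s ≤ 1 := by
      rw [← hμsum]
      apply Finset.sum_le_sum
      intro i _
      rcases hx i with h | h <;> simp [h, hμnn i]
    nlinarith [mul_nonneg hr.le hs0]
  constructor
  · -- forward: ratio constant → stationary
    intro h j
    classical
    set x : Fin n → ℝ := fun i => if i = j then 1 else 0 with hxdef
    have hx : ∀ i, x i = 0 ∨ x i = 1 := by
      intro i; by_cases hij : i = j <;> simp [hxdef, hij]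
    -- some index ≠ j
    have hex : ∃ i : Fin n, i ≠ j := by
      by_cases hj : j = ⟨0, by omega⟩
      · exact ⟨⟨1, by omega⟩, by subst hj; simp [Fin.ext_iff]⟩
      · exact ⟨⟨0, by omega⟩, fun h => hj h.symm⟩
    obtain ⟨i0, hi0⟩ := hex
    have hx0 : x ≠ (fun _ => 0) := by
      intro hc
      have := congrFun hc j
      simp [hxdef] at this
    have hx1 : x ≠ (fun _ => 1) := by
      intro hc
      have := congrFun hc i0
      simp [hxdef, hi0] at this
    have h' := h x hx hx0 hx1
    set D := ∑ i, ∑ l, (1 - x i) * (μ i * W i l) * x l with hD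
    set U := ∑ i, ∑ l, x i * (μ i * W i l) * (1 - x l) with hU
    set d := 1 + (r - 1) * ∑ i, x i * μ i with hd
    have hdp : 0 < d := hdpos x hx
    have hUne : U ≠ 0 := by
      intro h0
      rw [h0] at h'
      simp at h'
      exact absurd h'.symm (by positivity)
    have hDU : D = U := by
      have hrr : r ≠ 0 := hr.ne'
      field_simp at h'
      nlinarith [h']
    -- compute D and U
    have hDval : D = ∑ i, μ i * W i j - μ j * W j j := by
      rw [hD, hxdef]
      have : ∀ i : Fin n, (∑ l, (1 - if i = j then (1:ℝ) else 0) * (μ i * W i l) *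
          (if l = j then (1:ℝ) else 0)) = (1 - if i = j then (1:ℝ) else 0) * (μ i * W i j) := by
        intro i
        rw [Finset.sum_eq_single j]
        · simp
        · intro b _ hb; simp [hb]
        · simp
      rw [Finset.sum_congr rfl fun i _ => this i]
      rw [Finset.sum_congr rfl (g := fun i => μ i * W i j - (if i = j then (1:ℝ) else 0) * (μ i * W i j)) (fun i _ => by ring)]
      rw [Finset.sum_sub_distrib]
      congr 1
      rw [Finset.sum_eq_single j]
      · simp
      · intro b _ hb; simp [hb]
      · simp
    have hUval : U = μ j - μ j * W j j := by
      rw [hU, hxdef]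
      rw [Finset.sum_eq_single j]
      · have : ∀ l : Fin n, ((if j = j then (1:ℝ) else 0) * (μ j * W j l) *
            (1 - if l = j then (1:ℝ) else 0)) = μ j * W j l - (if l = j then (1:ℝ) else 0) * (μ j * W j l) := by
          intro l; by_cases hl : l = j <;> simp [hl]
        rw [Finset.sum_congr rfl fun l _ => this l, Finset.sum_sub_distrib]
        rw [← Finset.mul_sum, hrow j]
        congr 1
        · ring
        rw [Finset.sum_eq_single j]
        · simp
        · intro b _ hb; simp [hb]
        · simp
      · intro b _ hb; simp [hb]
      · simp
    rw [hDval, hUval] at hDU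
    linarith
  · -- backward: stationary → ratio constant
    intro stat x hx hx0 hx1
    classical
    have hμpos := stat_pos n W hnn hirr μ hμnn hμsum stat
    set D := ∑ i, ∑ l, (1 - x i) * (μ i * W i l) * x l with hD
    set U := ∑ i, ∑ l, x i * (μ i * W i l) * (1 - x l) with hU
    set d := 1 + (r - 1) * ∑ i, x i * μ i with hd
    have hdp : 0 < d := hdpos x hx
    -- D = U
    have hDval : D = (∑ l, μ l * x l) - ∑ i, ∑ l, x i * (μ i * W i l) * x l := by
      rw [hD]
      have : ∀ i l : Fin n, (1 - x i) * (μ i * W i l) * x l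
          = (μ i * W i l) * x l - x i * (μ i * W i l) * x l := fun i l => by ring
      simp only [this, Finset.sum_sub_distrib]
      congr 1
      rw [Finset.sum_comm]
      apply Finset.sum_congr rfl
      intro l _
      rw [← Finset.sum_mul, stat l]
    have hUval : U = (∑ i, x i * μ i) - ∑ i, ∑ l, x i * (μ i * W i l) * x l := by
      rw [hU]
      have : ∀ i l : Fin n, x i * (μ i * W i l) * (1 - x l)
          = x i * (μ i * W i l) - x i * (μ i * W i l) * x l := fun i l => by ring
      simp only [this, Finset.sum_sub_distrib]
      congr 1
      apply Finset.sum_congr rfl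
      intro i _
      have : ∀ l : Fin n, x i * (μ i * W i l) = (x i * μ i) * W i l := fun l => by ring
      simp only [this, ← Finset.mul_sum, hrow i, mul_one]
    have hDU : D = U := by
      rw [hDval, hUval]
      congr 1
      apply Finset.sum_congr rfl
      intro i _
      ring
    -- U > 0
    have hcross : ∃ a b : Fin n, x a = 1 ∧ x b = 0 ∧ W a b ≠ 0 := by
      by_contra hc
      push_neg at hc
      have hcut : ∀ a b : Fin n, x a = 1 → ¬ (x b = 1) → W a b = 0 := by
        intro a b ha hb
        have hb0 : x b = 0 := (hx b).resolve_right hb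
        exact hc a b ha hb0
      have hex1 : ∃ a, x a = 1 := by
        by_contra hc1
        push_neg at hc1
        apply hx0
        funext i
        exact (hx i).resolve_right (hc1 i)
      have hex0 : ∃ b, ¬ (x b = 1) := by
        by_contra hc1
        push_neg at hc1
        apply hx1
        funext i
        exact hc1 i
      obtain ⟨a, ha⟩ := hex1
      obtain ⟨b, hb⟩ := hex0
      obtain ⟨k, hk⟩ := hirr a b
      exact hk (cut_lemma n W (fun c => x c = 1) hcut k a b ha hb)
    obtain ⟨a, b, ha, hb, hWab⟩ := hcross
    have hUpos : 0 < U := by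
      have hterm : 0 < x a * (μ a * W a b) * (1 - x b) := by
        rw [ha, hb]
        have : 0 < W a b := lt_of_le_of_ne (hnn a b) (Ne.symm hWab)
        have := mul_pos (hμpos a) this
        nlinarith
      rw [hU]
      have hnn' : ∀ i ∈ Finset.univ, (0:ℝ) ≤ ∑ l, x i * (μ i * W i l) * (1 - x l) := by
        intro i _
        apply Finset.sum_nonneg
        intro l _
        have h1 : 0 ≤ x i := by rcases hx i with h | h <;> simp [h]
        have h2 : 0 ≤ 1 - x l := by rcases hx l with h | h <;> simp [h]
        have h3 : 0 ≤ μ i * W i l := mul_nonneg (hμnn i) (hnn i l)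
        positivity
      calc (0:ℝ) < ∑ l, x a * (μ a * W a l) * (1 - x l) := by
            apply Finset.sum_pos' (fun l _ => ?_) ⟨b, Finset.mem_univ b, hterm⟩
            have h1 : 0 ≤ x a := by rcases hx a with h | h <;> simp [h]
            have h2 : 0 ≤ 1 - x l := by rcases hx l with h | h <;> simp [h]
            have h3 : 0 ≤ μ a * W a l := mul_nonneg (hμnn a) (hnn a l)
            positivity
        _ ≤ U := by
            rw [hU]
            exact Finset.single_le_sum hnn' (Finset.mem_univ a)
    rw [hDU]
    have hUne : U ≠ 0 := hUpos.ne'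
    have hdne : d ≠ 0 := hdp.ne'
    field_simp
end

section
/- For the two-vertex spatial Moran process with c := w₁/w₂ and stationary selection m = 1/(c+1), the fixation probability starting from any mixture α = (a,1−a) over the single-mutant states equals r/(r+1) = (1 − 1/r)/(1 − 1/r²) for r ≠ 1 (and 1/2 for r = 1). -/
/-! At the stationary weight `m = 1/(c+1)` we have `1 - m = c/(c+1)`, so both denominators
factor as `(r+1)` times the corresponding numerator weight: `m c + r(1-m) = c(r+1)/(c+1)` and
`(1-m)/c + r m = (r+1)/(c+1)`. Hence a mutant starting at either vertex fixes with probability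
`r/(r+1)`, and so does any mixture of the two starts. -/

section TwoVertex

variable {K : Type*} [Field K]

def twoVertexFixation (c r a m : K) : K :=
  r * a * (1 - m) / (m * c + r * (1 - m)) + r * m * (1 - a) / ((1 - m) / c + r * m)

lemma one_sub_one_div_add_one {c : K} (hc1 : c + 1 ≠ 0) : 1 - 1 / (c + 1) = c / (c + 1) := by
  field_simp
  ring

lemma twoVertexFixation_stationary {c r : K} (a : K) (hc : c ≠ 0) (hc1 : c + 1 ≠ 0)
    (hr1 : r + 1 ≠ 0) : twoVertexFixation c r a (1 / (c + 1)) = r / (r + 1) := by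
  have hden₁ : 1 / (c + 1) * c + r * (c / (c + 1)) = c * (r + 1) / (c + 1) := by ring
  have hden₂ : c / (c + 1) / c + r * (1 / (c + 1)) = (r + 1) / (c + 1) := by
    field_simp
    ring
  rw [twoVertexFixation, one_sub_one_div_add_one hc1, hden₁, hden₂]
  field_simp
  ring

-- At `r = -1` both sides are `0` by the convention `x / 0 = 0`.
lemma div_add_one_eq_one_sub_inv_div_one_sub_inv_sq {r : K} (hr : r ≠ 0) (hr1 : r ≠ 1) :
    r / (r + 1) = (1 - 1 / r) / (1 - 1 / r ^ 2) := by
  have hfactor : 1 - 1 / r ^ 2 = (1 - 1 / r) * ((r + 1) / r) := by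
    field_simp
    ring
  have hsub : 1 - 1 / r ≠ 0 := by
    rw [one_sub_div hr]
    exact div_ne_zero (sub_ne_zero.mpr hr1) hr
  rw [hfactor, div_mul_cancel_left₀ hsub, inv_div]

end TwoVertex

theorem twoVertex_stationary_moran_fixation_general (c r a m : ℝ)
    (hc : 0 < c) (hr : 0 < r)
    (hm : m = 1 / (c + 1)) :
    r * a * (1 - m) / (m * c + r * (1 - m)) + r * m * (1 - a) / ((1 - m) / c + r * m)
        = r / (r + 1)
    ∧ (r ≠ 1 → r / (r + 1) = (1 - 1 / r) / (1 - 1 / r ^ 2))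
    ∧ (r = 1 → r / (r + 1) = 1 / 2) := by
  have hr1 : r + 1 ≠ 0 := by positivity
  refine ⟨?_, fun hne => div_add_one_eq_one_sub_inv_div_one_sub_inv_sq hr.ne' hne, ?_⟩
  · subst hm
    exact twoVertexFixation_stationary a hc.ne' (by positivity) hr1
  · rintro rfl
    norm_num

/-- For the two-vertex spatial Moran process with `c := w₁/w₂` and stationary
selection `m = 1/(c+1)`, the fixation probability
`F(m,a) = r·a·(1−m)/(m·c + r(1−m)) + r·m·(1−a)/((1−m)/c + r·m)` starting from any mixture
`α = (a, 1−a)` over the single-mutant states equals `r/(r+1)` — which equals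
`(1 − 1/r)/(1 − 1/r²)` for `r ≠ 1`, and `1/2` for `r = 1`. -/
theorem twoVertex_stationary_moran_fixation (c r a m : ℝ)
    (hc : 0 < c) (hr : 0 < r) (ha : a ∈ Set.Icc (0 : ℝ) 1)
    (hm : m = 1 / (c + 1)) :
    r * a * (1 - m) / (m * c + r * (1 - m)) + r * m * (1 - a) / ((1 - m) / c + r * m)
        = r / (r + 1)
    ∧ (r ≠ 1 → r / (r + 1) = (1 - 1 / r) / (1 - 1 / r ^ 2))
    ∧ (r = 1 → r / (r + 1) = 1 / 2) :=
  twoVertex_stationary_moran_fixation_general c r a m hc hr hm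
end

section
/- For the three-vertex spatial Moran process with Galanis's weight matrix W = [[0,1/4,3/4],[1/4,0,3/4],[1/2,1/2,0]], neutral fitness r = 1, selection policy μ = (m₁, m₂, 1−m₁−m₂), and initial distribution α = (a₁, a₂, 1−a₁−a₂) over the three single-mutant configurations, the fixation probability equals (2a₂ + 3m₁ − 3a₁m₁ + 3a₁m₂ − 5a₂m₁ − 2a₂m₂)/(m₁ + m₂ + 2). -/
set_option maxHeartbeats 2000000 in
/-- For the three-vertex spatial Moran process with Galanis's weight matrix
`W = [[0,1/4,3/4],[1/4,0,3/4],[1/2,1/2,0]]`, neutral fitness `r = 1`, selection policy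
`μ = (m₁, m₂, 1−m₁−m₂)`, and initial distribution `α = (a₁, a₂, 1−a₁−a₂)` over the three
single-mutant configurations (mutant at vertex 2, mutant at vertex 3, mutant at vertex 1,
in the paper's ordering), the fixation probability equals
`(2a₂ + 3m₁ − 3a₁m₁ + 3a₁m₂ − 5a₂m₁ − 2a₂m₂)/(m₁ + m₂ + 2)`.
The absorption probabilities `ρ₁, ρ₂, ρ₃` (single mutant at vertex 1, 2, 3) and
`ρ₁₂, ρ₁₃, ρ₂₃` (mutants at the indicated pair of vertices) are characterized by their
one-step harmonicity equations for the chain: at neutral fitness, vertex `u` is selected with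
probability `μ(u)` and its offspring replaces a neighbour chosen according to `W(u,·)`;
all-zeros and all-ones are absorbing (contributing `0` resp. `1`). -/
theorem galanis_neutral_fixation (m1 m2 a1 a2 : ℝ)
    (hm1 : 0 ≤ m1) (hm2 : 0 ≤ m2) (hm12 : m1 + m2 ≤ 1)
    (ha1 : 0 ≤ a1) (ha2 : 0 ≤ a2) (ha12 : a1 + a2 ≤ 1)
    (m3 : ℝ) (hm3 : m3 = 1 - m1 - m2)
    (ρ1 ρ2 ρ3 ρ12 ρ13 ρ23 : ℝ)
    (h1 : ρ1 = m1 * (1/4) * ρ12 + m1 * (3/4) * ρ13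
              + (m2 * (1/4) + m3 * (1/2)) * 0
              + (1 - m1 - m2 * (1/4) - m3 * (1/2)) * ρ1)
    (h2 : ρ2 = m2 * (1/4) * ρ12 + m2 * (3/4) * ρ23
              + (m1 * (1/4) + m3 * (1/2)) * 0
              + (1 - m2 - m1 * (1/4) - m3 * (1/2)) * ρ2)
    (h3 : ρ3 = m3 * (1/2) * ρ13 + m3 * (1/2) * ρ23
              + (m1 * (3/4) + m2 * (3/4)) * 0
              + (1 - m3 - m1 * (3/4) - m2 * (3/4)) * ρ3)
    (h12 : ρ12 = (m1 * (3/4) + m2 * (3/4)) * 1 + m3 * (1/2) * ρ2 + m3 * (1/2) * ρ1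
              + (1 - m1 * (3/4) - m2 * (3/4) - m3) * ρ12)
    (h13 : ρ13 = (m1 * (1/4) + m3 * (1/2)) * 1 + m2 * (1/4) * ρ3 + m2 * (3/4) * ρ1
              + (1 - m1 * (1/4) - m2 - m3 * (1/2)) * ρ13)
    (h23 : ρ23 = (m2 * (1/4) + m3 * (1/2)) * 1 + m1 * (1/4) * ρ3 + m1 * (3/4) * ρ2
              + (1 - m1 - m2 * (1/4) - m3 * (1/2)) * ρ23) :
    a1 * ρ2 + a2 * ρ3 + (1 - a1 - a2) * ρ1
      = (2 * a2 + 3 * m1 - 3 * a1 * m1 + 3 * a1 * m2 - 5 * a2 * m1 - 2 * a2 * m2)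
          / (m1 + m2 + 2) := by
  subst hm3
  have hrem : (0:ℝ) < ((1/32 : ℝ) + (-1/64 : ℝ)*m2 + (-1/128 : ℝ)*m2^2 + (1/256 : ℝ)*m2^3 + (-1/64 : ℝ)*m1 + (-1/16 : ℝ)*m1*m2 + (21/256 : ℝ)*m1*m2^2 + (-3/128 : ℝ)*m1*m2^3 + (-1/128 : ℝ)*m1^2 + (21/256 : ℝ)*m1^2*m2 + (-3/64 : ℝ)*m1^2*m2^2 + (1/256 : ℝ)*m1^3 + (-3/128 : ℝ)*m1^3*m2) := by nlinarith [sq_nonneg m1, sq_nonneg m2, sq_nonneg (m1-m2), sq_nonneg (m1+m2), sq_nonneg (1-m1-m2), mul_nonneg hm1 hm2, sq_nonneg (m1*m2), mul_nonneg (mul_nonneg hm1 hm2) hm1, mul_nonneg (mul_nonneg hm1 hm2) hm2]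
  have hD : (0:ℝ) < m1 + m2 + 2 := by linarith
  have hdet : ((1/16 : ℝ) + (-1/32 : ℝ)*m2^2 + (1/256 : ℝ)*m2^4 + (-5/32 : ℝ)*m1*m2 + (3/32 : ℝ)*m1*m2^2 + (5/128 : ℝ)*m1*m2^3 + (-3/128 : ℝ)*m1*m2^4 + (-1/32 : ℝ)*m1^2 + (3/32 : ℝ)*m1^2*m2 + (9/128 : ℝ)*m1^2*m2^2 + (-9/128 : ℝ)*m1^2*m2^3 + (5/128 : ℝ)*m1^3*m2 + (-9/128 : ℝ)*m1^3*m2^2 + (1/256 : ℝ)*m1^4 + (-3/128 : ℝ)*m1^4*m2) ≠ 0 := by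
    have : ((1/16 : ℝ) + (-1/32 : ℝ)*m2^2 + (1/256 : ℝ)*m2^4 + (-5/32 : ℝ)*m1*m2 + (3/32 : ℝ)*m1*m2^2 + (5/128 : ℝ)*m1*m2^3 + (-3/128 : ℝ)*m1*m2^4 + (-1/32 : ℝ)*m1^2 + (3/32 : ℝ)*m1^2*m2 + (9/128 : ℝ)*m1^2*m2^2 + (-9/128 : ℝ)*m1^2*m2^3 + (5/128 : ℝ)*m1^3*m2 + (-9/128 : ℝ)*m1^3*m2^2 + (1/256 : ℝ)*m1^4 + (-3/128 : ℝ)*m1^4*m2) = (m1+m2+2) * ((1/32 : ℝ) + (-1/64 : ℝ)*m2 + (-1/128 : ℝ)*m2^2 + (1/256 : ℝ)*m2^3 + (-1/64 : ℝ)*m1 + (-1/16 : ℝ)*m1*m2 + (21/256 : ℝ)*m1*m2^2 + (-3/128 : ℝ)*m1*m2^3 + (-1/128 : ℝ)*m1^2 + (21/256 : ℝ)*m1^2*m2 + (-3/64 : ℝ)*m1^2*m2^2 + (1/256 : ℝ)*m1^3 + (-3/128 : ℝ)*m1^3*m2) := by ring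
    rw [this]; positivity
  have e1 : (m1 + m2 + 2) * ρ1 = 3 * m1 := by
    apply mul_left_cancel₀ hdet
    linear_combination ((1/4 : ℝ) + (1/4 : ℝ)*m2 + (-1/16 : ℝ)*m2^3 + (-1/64 : ℝ)*m2^4 + (-1/16 : ℝ)*m1 + (-5/16 : ℝ)*m1*m2 + (-3/32 : ℝ)*m1*m2^2 + (7/64 : ℝ)*m1*m2^3 + (11/256 : ℝ)*m1*m2^4 + (-1/8 : ℝ)*m1^2 + (15/64 : ℝ)*m1^2*m2 + (9/64 : ℝ)*m1^2*m2^2 + (5/256 : ℝ)*m1^2*m2^3 + (3/256 : ℝ)*m1^2*m2^4 + (1/32 : ℝ)*m1^3 + (1/32 : ℝ)*m1^3*m2 + (-3/32 : ℝ)*m1^3*m2^2 + (9/256 : ℝ)*m1^3*m2^3 + (1/64 : ℝ)*m1^4 + (-19/256 : ℝ)*m1^4*m2 + (9/256 : ℝ)*m1^4*m2^2 + (-1/256 : ℝ)*m1^5 + (3/256 : ℝ)*m1^5*m2) * h1 + ((1/16 : ℝ)*m1 + (-1/32 : ℝ)*m1*m2 + (-3/64 : ℝ)*m1*m2^2 +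 (1/128 : ℝ)*m1*m2^3 + (1/128 : ℝ)*m1*m2^4 + (-1/32 : ℝ)*m1^2 + (9/64 : ℝ)*m1^2*m2 + (-15/128 : ℝ)*m1^2*m2^2 + (-19/256 : ℝ)*m1^2*m2^3 + (3/256 : ℝ)*m1^2*m2^4 + (-3/64 : ℝ)*m1^3 + (-15/128 : ℝ)*m1^3*m2 + (-21/128 : ℝ)*m1^3*m2^2 + (9/256 : ℝ)*m1^3*m2^3 + (1/128 : ℝ)*m1^4 + (-19/256 : ℝ)*m1^4*m2 + (9/256 : ℝ)*m1^4*m2^2 + (1/128 : ℝ)*m1^5 + (3/256 : ℝ)*m1^5*m2) * h2 + ((3/32 : ℝ)*m1*m2 + (3/64 : ℝ)*m1*m2^2 + (-3/128 : ℝ)*m1*m2^3 + (-3/256 : ℝ)*m1*m2^4 + (3/32 : ℝ)*m1^2*m2 + (-3/32 : ℝ)*m1^2*m2^2 + (-3/64 : ℝ)*m1^2*m2^3 + (3/256 : ℝ)*m1^2*m2^4 + (-9/128 : ℝ)*m1^3*m2 + (-15/256 : ℝ)*m1^3*m2^2 + (9/256 : ℝ)*m1^3*m2^3 + (-3/128 :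 ℝ)*m1^4*m2 + (9/256 : ℝ)*m1^4*m2^2 + (3/256 : ℝ)*m1^5*m2) * h3 + ((1/16 : ℝ)*m1 + (3/32 : ℝ)*m1*m2 + (1/64 : ℝ)*m1*m2^2 + (-3/128 : ℝ)*m1*m2^3 + (-1/128 : ℝ)*m1*m2^4 + (-1/16 : ℝ)*m1^2*m2 + (-1/128 : ℝ)*m1^2*m2^3 + (-3/256 : ℝ)*m1^2*m2^4 + (-1/32 : ℝ)*m1^3 + (3/128 : ℝ)*m1^3*m2 + (3/256 : ℝ)*m1^3*m2^2 + (-9/256 : ℝ)*m1^3*m2^3 + (1/64 : ℝ)*m1^4*m2 + (-9/256 : ℝ)*m1^4*m2^2 + (1/256 : ℝ)*m1^5 + (-3/256 : ℝ)*m1^5*m2) * h12 + ((3/8 : ℝ)*m1 + (3/32 : ℝ)*m1*m2 + (-9/64 : ℝ)*m1*m2^2 + (-3/128 : ℝ)*m1*m2^3 + (3/256 : ℝ)*m1*m2^4 + (3/32 : ℝ)*m1^2 + (-33/64 : ℝ)*m1^2*m2 + (9/128 : ℝ)*m1^2*m2^2 + (39/256 : ℝ)*m1^2*m2^3 + (-3/256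 : ℝ)*m1^2*m2^4 + (-9/64 : ℝ)*m1^3 + (9/128 : ℝ)*m1^3*m2 + (9/32 : ℝ)*m1^3*m2^2 + (-9/256 : ℝ)*m1^3*m2^3 + (-3/128 : ℝ)*m1^4 + (39/256 : ℝ)*m1^4*m2 + (-9/256 : ℝ)*m1^4*m2^2 + (3/256 : ℝ)*m1^5 + (-3/256 : ℝ)*m1^5*m2) * h13 + ((3/16 : ℝ)*m1*m2 + (-9/64 : ℝ)*m1*m2^3 + (-3/64 : ℝ)*m1*m2^4 + (-15/64 : ℝ)*m1^2*m2 + (-9/64 : ℝ)*m1^2*m2^2 + (-9/256 : ℝ)*m1^2*m2^3 + (-3/256 : ℝ)*m1^2*m2^4 + (9/128 : ℝ)*m1^3*m2^2 + (-9/256 : ℝ)*m1^3*m2^3 + (15/256 : ℝ)*m1^4*m2 + (-9/256 : ℝ)*m1^4*m2^2 + (-3/256 : ℝ)*m1^5*m2) * h23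
  have e2 : (m1 + m2 + 2) * ρ2 = 3 * m2 := by
    apply mul_left_cancel₀ hdet
    linear_combination ((1/16 : ℝ)*m2 + (-1/32 : ℝ)*m2^2 + (-3/64 : ℝ)*m2^3 + (1/128 : ℝ)*m2^4 + (1/128 : ℝ)*m2^5 + (-1/32 : ℝ)*m1*m2 + (9/64 : ℝ)*m1*m2^2 + (-15/128 : ℝ)*m1*m2^3 + (-19/256 : ℝ)*m1*m2^4 + (3/256 : ℝ)*m1*m2^5 + (-3/64 : ℝ)*m1^2*m2 + (-15/128 : ℝ)*m1^2*m2^2 + (-21/128 : ℝ)*m1^2*m2^3 + (9/256 : ℝ)*m1^2*m2^4 + (1/128 : ℝ)*m1^3*m2 + (-19/256 : ℝ)*m1^3*m2^2 + (9/256 : ℝ)*m1^3*m2^3 + (1/128 : ℝ)*m1^4*m2 + (3/256 : ℝ)*m1^4*m2^2) * h1 + ((1/4 : ℝ) + (-1/16 : ℝ)*m2 + (-1/8 : ℝ)*m2^2 + (1/32 : ℝ)*m2^3 + (1/64 : ℝ)*m2^4 + (-1/256 : ℝ)*m2^5 + (1/4 : ℝ)*m1 + (-5/16 : ℝ)*m1*m2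 + (15/64 : ℝ)*m1*m2^2 + (1/32 : ℝ)*m1*m2^3 + (-19/256 : ℝ)*m1*m2^4 + (3/256 : ℝ)*m1*m2^5 + (-3/32 : ℝ)*m1^2*m2 + (9/64 : ℝ)*m1^2*m2^2 + (-3/32 : ℝ)*m1^2*m2^3 + (9/256 : ℝ)*m1^2*m2^4 + (-1/16 : ℝ)*m1^3 + (7/64 : ℝ)*m1^3*m2 + (5/256 : ℝ)*m1^3*m2^2 + (9/256 : ℝ)*m1^3*m2^3 + (-1/64 : ℝ)*m1^4 + (11/256 : ℝ)*m1^4*m2 + (3/256 : ℝ)*m1^4*m2^2) * h2 + ((3/32 : ℝ)*m1*m2 + (3/32 : ℝ)*m1*m2^2 + (-9/128 : ℝ)*m1*m2^3 + (-3/128 : ℝ)*m1*m2^4 + (3/256 : ℝ)*m1*m2^5 + (3/64 : ℝ)*m1^2*m2 + (-3/32 : ℝ)*m1^2*m2^2 + (-15/256 : ℝ)*m1^2*m2^3 + (9/256 : ℝ)*m1^2*m2^4 + (-3/128 : ℝ)*m1^3*m2 + (-3/64 : ℝ)*m1^3*m2^2 + (9/256 : ℝ)*m1^3*m2^3 + (-3/256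 : ℝ)*m1^4*m2 + (3/256 : ℝ)*m1^4*m2^2) * h3 + ((1/16 : ℝ)*m2 + (-1/32 : ℝ)*m2^3 + (1/256 : ℝ)*m2^5 + (3/32 : ℝ)*m1*m2 + (-1/16 : ℝ)*m1*m2^2 + (3/128 : ℝ)*m1*m2^3 + (1/64 : ℝ)*m1*m2^4 + (-3/256 : ℝ)*m1*m2^5 + (1/64 : ℝ)*m1^2*m2 + (3/256 : ℝ)*m1^2*m2^3 + (-9/256 : ℝ)*m1^2*m2^4 + (-3/128 : ℝ)*m1^3*m2 + (-1/128 : ℝ)*m1^3*m2^2 + (-9/256 : ℝ)*m1^3*m2^3 + (-1/128 : ℝ)*m1^4*m2 + (-3/256 : ℝ)*m1^4*m2^2) * h12 + ((3/16 : ℝ)*m1*m2 + (-15/64 : ℝ)*m1*m2^2 + (15/256 : ℝ)*m1*m2^4 + (-3/256 : ℝ)*m1*m2^5 + (-9/64 : ℝ)*m1^2*m2^2 + (9/128 : ℝ)*m1^2*m2^3 + (-9/256 : ℝ)*m1^2*m2^4 + (-9/64 : ℝ)*m1^3*m2 + (-9/256 : ℝ)*m1^3*m2^2 + (-9/256 :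 ℝ)*m1^3*m2^3 + (-3/64 : ℝ)*m1^4*m2 + (-3/256 : ℝ)*m1^4*m2^2) * h13 + ((3/8 : ℝ)*m2 + (3/32 : ℝ)*m2^2 + (-9/64 : ℝ)*m2^3 + (-3/128 : ℝ)*m2^4 + (3/256 : ℝ)*m2^5 + (3/32 : ℝ)*m1*m2 + (-33/64 : ℝ)*m1*m2^2 + (9/128 : ℝ)*m1*m2^3 + (39/256 : ℝ)*m1*m2^4 + (-3/256 : ℝ)*m1*m2^5 + (-9/64 : ℝ)*m1^2*m2 + (9/128 : ℝ)*m1^2*m2^2 + (9/32 : ℝ)*m1^2*m2^3 + (-9/256 : ℝ)*m1^2*m2^4 + (-3/128 : ℝ)*m1^3*m2 + (39/256 : ℝ)*m1^3*m2^2 + (-9/256 : ℝ)*m1^3*m2^3 + (3/256 : ℝ)*m1^4*m2 + (-3/256 : ℝ)*m1^4*m2^2) * h23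
  have e3 : (m1 + m2 + 2) * ρ3 = 2 - 2*m1 - 2*m2 := by
    apply mul_left_cancel₀ hdet
    linear_combination ((3/16 : ℝ)*m2 + (-3/32 : ℝ)*m2^2 + (-9/64 : ℝ)*m2^3 + (3/128 : ℝ)*m2^4 + (3/128 : ℝ)*m2^5 + (-15/32 : ℝ)*m1*m2^2 + (9/64 : ℝ)*m1*m2^3 + (9/64 : ℝ)*m1*m2^4 + (-3/128 : ℝ)*m1*m2^5 + (-21/64 : ℝ)*m1^2*m2 + (27/128 : ℝ)*m1^2*m2^2 + (9/32 : ℝ)*m1^2*m2^3 + (-3/32 : ℝ)*m1^2*m2^4 + (3/32 : ℝ)*m1^3*m2 + (15/64 : ℝ)*m1^3*m2^2 + (-9/64 : ℝ)*m1^3*m2^3 + (9/128 : ℝ)*m1^4*m2 + (-3/32 : ℝ)*m1^4*m2^2 + (-3/128 : ℝ)*m1^5*m2) * h1 + ((3/16 : ℝ)*m1 + (-21/64 : ℝ)*m1*m2^2 + (3/32 : ℝ)*m1*m2^3 + (9/128 : ℝ)*m1*m2^4 + (-3/128 : ℝ)*m1*m2^5 + (-3/32 : ℝ)*m1^2 +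 (-15/32 : ℝ)*m1^2*m2 + (27/128 : ℝ)*m1^2*m2^2 + (15/64 : ℝ)*m1^2*m2^3 + (-3/32 : ℝ)*m1^2*m2^4 + (-9/64 : ℝ)*m1^3 + (9/64 : ℝ)*m1^3*m2 + (9/32 : ℝ)*m1^3*m2^2 + (-9/64 : ℝ)*m1^3*m2^3 + (3/128 : ℝ)*m1^4 + (9/64 : ℝ)*m1^4*m2 + (-3/32 : ℝ)*m1^4*m2^2 + (3/128 : ℝ)*m1^5 + (-3/128 : ℝ)*m1^5*m2) * h2 + ((1/8 : ℝ) + (1/8 : ℝ)*m2 + (-1/16 : ℝ)*m2^2 + (-1/16 : ℝ)*m2^3 + (1/128 : ℝ)*m2^4 + (1/128 : ℝ)*m2^5 + (1/8 : ℝ)*m1 + (-7/32 : ℝ)*m1*m2 + (-3/16 : ℝ)*m1*m2^2 + (19/128 : ℝ)*m1*m2^3 + (5/128 : ℝ)*m1*m2^4 + (-3/128 : ℝ)*m1*m2^5 + (-1/16 : ℝ)*m1^2 + (-3/16 : ℝ)*m1^2*m2 + (9/32 : ℝ)*m1^2*m2^2 + (5/64 : ℝ)*m1^2*m2^3 + (-3/32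 : ℝ)*m1^2*m2^4 + (-1/16 : ℝ)*m1^3 + (19/128 : ℝ)*m1^3*m2 + (5/64 : ℝ)*m1^3*m2^2 + (-9/64 : ℝ)*m1^3*m2^3 + (1/128 : ℝ)*m1^4 + (5/128 : ℝ)*m1^4*m2 + (-3/32 : ℝ)*m1^4*m2^2 + (1/128 : ℝ)*m1^5 + (-3/128 : ℝ)*m1^5*m2) * h3 + ((3/32 : ℝ)*m1*m2 + (-15/128 : ℝ)*m1*m2^3 + (3/128 : ℝ)*m1*m2^5 + (-15/64 : ℝ)*m1^2*m2^2 + (3/32 : ℝ)*m1^2*m2^4 + (-15/128 : ℝ)*m1^3*m2 + (9/64 : ℝ)*m1^3*m2^3 + (3/32 : ℝ)*m1^4*m2^2 + (3/128 : ℝ)*m1^5*m2) * h12 + ((1/8 : ℝ) + (-1/8 : ℝ)*m2 + (-1/16 : ℝ)*m2^2 + (1/16 : ℝ)*m2^3 + (1/128 : ℝ)*m2^4 + (-1/128 : ℝ)*m2^5 + (1/16 : ℝ)*m1 + (-5/16 : ℝ)*m1*m2 + (15/64 : ℝ)*m1*m2^2 + (-1/64 : ℝ)*m1*m2^3 + (-1/16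 : ℝ)*m1*m2^4 + (3/128 : ℝ)*m1*m2^5 + (-5/32 : ℝ)*m1^2 + (3/32 : ℝ)*m1^2*m2 + (-3/128 : ℝ)*m1^2*m2^2 + (-1/8 : ℝ)*m1^2*m2^3 + (3/32 : ℝ)*m1^2*m2^4 + (-5/64 : ℝ)*m1^3 + (1/32 : ℝ)*m1^3*m2 + (-5/64 : ℝ)*m1^3*m2^2 + (9/64 : ℝ)*m1^3*m2^3 + (1/32 : ℝ)*m1^4 + (1/128 : ℝ)*m1^4*m2 + (3/32 : ℝ)*m1^4*m2^2 + (1/64 : ℝ)*m1^5 + (3/128 : ℝ)*m1^5*m2) * h13 + ((1/8 : ℝ) + (1/16 : ℝ)*m2 + (-5/32 : ℝ)*m2^2 + (-5/64 : ℝ)*m2^3 + (1/32 : ℝ)*m2^4 + (1/64 : ℝ)*m2^5 + (-1/8 : ℝ)*m1 + (-5/16 : ℝ)*m1*m2 + (3/32 : ℝ)*m1*m2^2 + (1/32 : ℝ)*m1*m2^3 + (1/128 : ℝ)*m1*m2^4 + (3/128 : ℝ)*m1*m2^5 + (-1/16 : ℝ)*m1^2 + (15/64 : ℝ)*m1^2*m2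 + (-3/128 : ℝ)*m1^2*m2^2 + (-5/64 : ℝ)*m1^2*m2^3 + (3/32 : ℝ)*m1^2*m2^4 + (1/16 : ℝ)*m1^3 + (-1/64 : ℝ)*m1^3*m2 + (-1/8 : ℝ)*m1^3*m2^2 + (9/64 : ℝ)*m1^3*m2^3 + (1/128 : ℝ)*m1^4 + (-1/16 : ℝ)*m1^4*m2 + (3/32 : ℝ)*m1^4*m2^2 + (-1/128 : ℝ)*m1^5 + (3/128 : ℝ)*m1^5*m2) * h23
  rw [eq_div_iff (ne_of_gt hD)]
  linear_combination a1 * e2 + a2 * e3 + (1 - a1 - a2) * e1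
end
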